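/- arXiv:1606.03101 — 4 statements merged into one kernel-verified Lean document; each statement's English description precedes it below -/
import Mathlib

section
/- For every positive integer m, the sum over all positive integers n of m/(max(m,n))² is strictly less than 2. -/
/-!
For `n ≤ m` the term is `1/m`, so the first `m` terms add up to exactly `1`. The remaining terms
are `m/n²` for `n > m`, and `1/n² < 1/(n-1) - 1/n` makes their sum strictly smaller than the
telescoping sum `m · 1/m = 1`.
-/

open Filter Topology Finset

theorem Antitone.hasSum_sub_succ {f : ℕ → ℝ} {l : ℝ} (hf : Antitone f)
    (hl : Tendsto f atTop (𝓝 l)) : HasSum (fun n ↦ f n - f (n + 1)) (f 0 - l) := by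
  rw [hasSum_iff_tendsto_nat_of_nonneg (fun n ↦ sub_nonneg.2 (hf n.le_succ))]
  simp only [sum_range_sub']
  exact tendsto_const_nhds.sub hl

theorem hasSum_one_div_add_sub_one_div_add_add_one {x : ℝ} (hx : 0 < x) :
    HasSum (fun n : ℕ ↦ 1 / (n + x) - 1 / (n + x + 1)) (1 / x) := by
  have hanti : Antitone fun n : ℕ ↦ 1 / (n + x) := fun a b hab ↦
    one_div_le_one_div_of_le (by positivity) (by gcongr)
  have hlim : Tendsto (fun n : ℕ ↦ 1 / (n + x)) atTop (𝓝 0) := by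
    simp only [one_div]
    exact (tendsto_atTop_add_const_right atTop x tendsto_natCast_atTop_atTop).inv_tendsto_atTop
  convert hanti.hasSum_sub_succ hlim using 1
  · ext n
    push_cast
    ring
  · simp

theorem one_div_add_one_sq_lt_sub {y : ℝ} (hy : 0 < y) : 1 / (y + 1) ^ 2 < 1 / y - 1 / (y + 1) := by
  rw [show 1 / y - 1 / (y + 1) = 1 / (y * (y + 1)) by field_simp; ring]
  exact one_div_lt_one_div_of_lt (by positivity) (by nlinarith)

theorem summable_one_div_add_add_one_sq {x : ℝ} (hx : 0 < x) :
    Summable fun n : ℕ ↦ 1 / (n + x + 1) ^ 2 :=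
  (hasSum_one_div_add_sub_one_div_add_add_one hx).summable.of_nonneg_of_le
    (fun n ↦ by positivity) fun n ↦ (one_div_add_one_sq_lt_sub (by positivity)).le

theorem tsum_one_div_add_add_one_sq_lt {x : ℝ} (hx : 0 < x) :
    ∑' n : ℕ, 1 / (n + x + 1) ^ 2 < 1 / x := by
  have htel := hasSum_one_div_add_sub_one_div_add_add_one hx
  rw [← htel.tsum_eq]
  have hlt (n : ℕ) : 1 / (n + x + 1) ^ 2 < 1 / (n + x) - 1 / (n + x + 1) :=
    one_div_add_one_sq_lt_sub (by positivity)
  exact (summable_one_div_add_add_one_sq hx).tsum_lt_tsum (fun n ↦ (hlt n).le) (hlt 0)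
    htel.summable

theorem stmt2 (m : ℕ+) :
    ∑' n : ℕ+, ((m : ℝ) / ((max (m : ℕ) (n : ℕ) : ℕ) : ℝ) ^ 2) < 2 := by
  set f : ℕ → ℝ := fun n ↦ (m : ℝ) / ((max (m : ℕ) n : ℕ) : ℝ) ^ 2
  have hm : (0 : ℝ) < m := by positivity
  have hhead : ∑ i ∈ range m, f (i + 1) = 1 := by
    have hterm (i : ℕ) (hi : i ∈ range m) : f (i + 1) = 1 / m := by
      simp only [f, max_eq_left (Nat.succ_le_of_lt (mem_range.1 hi))]
      field_simp
    simp [sum_congr rfl hterm, hm.ne']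
  have htail : (fun i : ℕ ↦ f (i + m + 1)) = fun i : ℕ ↦ (m : ℝ) * (1 / (i + m + 1) ^ 2) := by
    ext i
    simp only [f, max_eq_right (by omega : (m : ℕ) ≤ i + m + 1)]
    push_cast
    ring
  have hsumm : Summable fun i : ℕ ↦ f (i + 1) := by
    refine (summable_nat_add_iff m).1 ?_
    rw [htail]
    exact (summable_one_div_add_add_one_sq hm).mul_left _
  rw [tsum_pnat_eq_tsum_succ (f := f), ← hsumm.sum_add_tsum_nat_add m, hhead, htail,
    tsum_mul_left]
  have htail_lt := mul_lt_mul_of_pos_left (tsum_one_div_add_add_one_sq_lt hm) hm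
  rw [mul_one_div_cancel hm.ne'] at htail_lt
  linarith
end

section
/- The constant √2 in the embedding inequality ‖f‖_{H²ᵢ} ≤ √2 ‖f‖_{𝓗²} is optimal: for every C with ‖f‖_{H²ᵢ} ≤ C‖f‖_{𝓗²} for all f ∈ 𝓗², one has C ≥ √2. Equivalently, the supremum over nonzero a ∈ ℓ² of (∑_{m,n} a_m conj(a_n) √(mn)/[max(m,n)]²) / (∑_n |a_n|²) equals 2. -/
/-!
Upper bound: the Schur test with weights `n^(-1/2)`. Since `K(m,n) n^(-1/2) = √m / max(m,n)²`
and `∑ₙ 1/max(m,n)² ≤ m · 1/m² + ∑_{n>m} 1/n² ≤ 2/m`, the weights satisfy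
`∑ₙ K(m,n) n^(-1/2) ≤ 2 m^(-1/2)`, which bounds the form by `2 ‖a‖²`.

Lower bound: for `a_n = n^(-1/2)` on `n ≤ N` the form is
`∑_{m,n ≤ N} 1/max(m,n)² = ∑_{k ≤ N} (2k-1)/k² = 2 H_N - ∑_{k ≤ N} 1/k²`,
while `‖a‖² = H_N → ∞`, so the Rayleigh quotients tend to `2`.
-/

open Finset Filter Topology ComplexConjugate
open scoped ENNReal

section SchurTest

variable {ι : Type*} {K : ι → ι → ℝ} {w : ι → ℝ} {c : ℝ}

theorem tsum_ofReal_mul_mul_le_of_schur (hK : ∀ m n, 0 ≤ K m n)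
    (hsymm : ∀ m n, K m n = K n m) (hw : ∀ n, 0 < w n) (hrow : ∀ m, Summable fun n => K m n * w n)
    (hbound : ∀ m, ∑' n, K m n * w n ≤ c * w m) (x : ι → ℝ) :
    ∑' p : ι × ι, ENNReal.ofReal (x p.1 * x p.2 * K p.1 p.2)
      ≤ ENNReal.ofReal c * ∑' n, ENNReal.ofReal (x n ^ 2) := by
  set g : ι × ι → ℝ≥0∞ := fun p => ENNReal.ofReal (x p.1 ^ 2 / w p.1 * (K p.1 p.2 * w p.2))
  -- weighted AM-GM: `2 x y ≤ x² (w'/w) + y² (w/w')`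
  have hamgm : ∀ p, ENNReal.ofReal (x p.1 * x p.2 * K p.1 p.2) ≤ 2⁻¹ * (g p + g p.swap) := by
    rintro ⟨m, n⟩
    have hm := hw m
    have hn := hw n
    have hreal : x m * x n * K m n
        ≤ 2⁻¹ * (x m ^ 2 / w m * (K m n * w n) + x n ^ 2 / w n * (K n m * w m)) := by
      rw [hsymm n m, div_mul_eq_mul_div, div_mul_eq_mul_div, div_add_div _ _ hm.ne' hn.ne',
        mul_div_assoc', le_div_iff₀ (by positivity)]
      nlinarith [mul_nonneg (hK m n) (sq_nonneg (x m * w n - x n * w m))]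
    have hKmn := hK m n
    have hKnm := hK n m
    refine (ENNReal.ofReal_le_ofReal hreal).trans_eq ?_
    rw [ENNReal.ofReal_mul (by norm_num), ENNReal.ofReal_add (by positivity) (by positivity),
      ENNReal.ofReal_inv_of_pos two_pos, ENNReal.ofReal_ofNat]
    rfl
  have hrowsum : ∀ m, ∑' n, g (m, n) ≤ ENNReal.ofReal c * ENNReal.ofReal (x m ^ 2) := by
    intro m
    have hm := hw m
    calc ∑' n, g (m, n) = ENNReal.ofReal (x m ^ 2 / w m * ∑' n, K m n * w n) := by
          rw [← tsum_mul_left, ENNReal.ofReal_tsum_of_nonneg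
            (fun n => by have := hK m n; have := hw n; positivity) ((hrow m).mul_left _)]
      _ ≤ ENNReal.ofReal (x m ^ 2 / w m * (c * w m)) := by gcongr; exact hbound m
      _ = ENNReal.ofReal c * ENNReal.ofReal (x m ^ 2) := by
          rw [← ENNReal.ofReal_mul' (sq_nonneg _)]
          congr 1
          field_simp
  calc ∑' p : ι × ι, ENNReal.ofReal (x p.1 * x p.2 * K p.1 p.2)
      ≤ ∑' p, 2⁻¹ * (g p + g p.swap) := ENNReal.tsum_le_tsum hamgm
    _ = ∑' p, g p := by
        have hswap : ∑' p : ι × ι, g p.swap = ∑' p, g p := (Equiv.prodComm ι ι).tsum_eq g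
        rw [ENNReal.tsum_mul_left, ENNReal.tsum_add, hswap, ← two_mul,
          ← mul_assoc, ENNReal.inv_mul_cancel two_ne_zero ENNReal.ofNat_ne_top, one_mul]
    _ = ∑' m, ∑' n, g (m, n) := ENNReal.tsum_prod (f := fun m n => g (m, n))
    _ ≤ ∑' m, ENNReal.ofReal c * ENNReal.ofReal (x m ^ 2) := ENNReal.tsum_le_tsum hrowsum
    _ = ENNReal.ofReal c * ∑' n, ENNReal.ofReal (x n ^ 2) := ENNReal.tsum_mul_left

theorem norm_tsum_tsum_mul_conj_le_of_schur (hc : 0 ≤ c) (hK : ∀ m n, 0 ≤ K m n)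
    (hsymm : ∀ m n, K m n = K n m) (hw : ∀ n, 0 < w n) (hrow : ∀ m, Summable fun n => K m n * w n)
    (hbound : ∀ m, ∑' n, K m n * w n ≤ c * w m) {a : ι → ℂ}
    (ha : Summable fun n => ‖a n‖ ^ 2) :
    ‖∑' m, ∑' n, a m * conj (a n) * K m n‖ ≤ c * ∑' n, ‖a n‖ ^ 2 := by
  have hnorm : ∀ p : ι × ι, ‖a p.1 * conj (a p.2) * K p.1 p.2‖ = ‖a p.1‖ * ‖a p.2‖ * K p.1 p.2 :=
    fun p => by simp [abs_of_nonneg (hK p.1 p.2)]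
  have hE := tsum_ofReal_mul_mul_le_of_schur hK hsymm hw hrow hbound fun n => ‖a n‖
  rw [← ENNReal.ofReal_tsum_of_nonneg (fun _ => sq_nonneg _) ha, ← ENNReal.ofReal_mul hc] at hE
  have hsummable : Summable fun p : ι × ι => ‖a p.1‖ * ‖a p.2‖ * K p.1 p.2 :=
    (ENNReal.summable_toReal (ne_top_of_le_ne_top ENNReal.ofReal_ne_top hE)).congr
      fun p => ENNReal.toReal_ofReal (by have := hK p.1 p.2; positivity)
  have hA : Summable fun p : ι × ι => a p.1 * conj (a p.2) * K p.1 p.2 :=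
    Summable.of_norm (hsummable.congr fun p => (hnorm p).symm)
  calc ‖∑' m, ∑' n, a m * conj (a n) * K m n‖
      = ‖∑' p : ι × ι, a p.1 * conj (a p.2) * K p.1 p.2‖ := by rw [hA.tsum_prod' hA.prod_factor]
    _ ≤ ∑' p : ι × ι, ‖a p.1‖ * ‖a p.2‖ * K p.1 p.2 :=
        (norm_tsum_le_tsum_norm hA.norm).trans_eq (tsum_congr hnorm)
    _ ≤ c * ∑' n, ‖a n‖ ^ 2 := by
        rwa [← ENNReal.ofReal_le_ofReal_iff (by positivity),
          ENNReal.ofReal_tsum_of_nonneg (fun p => by have := hK p.1 p.2; positivity) hsummable]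

end SchurTest

noncomputable def maxKernel (m n : ℕ) : ℝ := √((m : ℝ) * n) / ((max m n : ℕ) : ℝ) ^ 2

lemma sum_range_inv_max_sq_le {m : ℕ} (hm : 0 < m) (N : ℕ) :
    ∑ n ∈ range N, (((max m (n + 1) : ℕ) : ℝ) ^ 2)⁻¹ ≤ 2 / m := by
  have hm' : (0 : ℝ) < m := by exact_mod_cast hm
  -- a telescoping majorant: the terms are `1/m²` up to `n = m`, then `1/n² ≤ 1/(n-1) - 1/n`
  set ψ : ℕ → ℝ := fun n => if n ≤ m then (2 * m - n) / m ^ 2 else (n : ℝ)⁻¹ with hψ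
  have hψ_of_le : ∀ n, m ≤ n → ψ n = (n : ℝ)⁻¹ := by
    intro n hn
    rcases hn.eq_or_lt with rfl | hlt
    · simp only [hψ, le_refl, if_true]
      field_simp
      ring
    · simp [hψ, not_le.2 hlt]
  have hstep : ∀ n, (((max m (n + 1) : ℕ) : ℝ) ^ 2)⁻¹ ≤ ψ n - ψ (n + 1) := by
    intro n
    rcases lt_or_ge n m with hnm | hmn
    · simp only [hψ, max_eq_left (show n + 1 ≤ m by omega), if_pos hnm.le,
        if_pos (show n + 1 ≤ m by omega)]
      push_cast
      apply le_of_eq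
      field_simp
      ring
    · rw [max_eq_right (by omega), hψ_of_le n hmn, hψ_of_le (n + 1) (by omega)]
      have hn : (0 : ℝ) < n := by exact_mod_cast hm.trans_le hmn
      push_cast
      rw [inv_sub_inv hn.ne' (by positivity), add_sub_cancel_left, one_div]
      exact inv_anti₀ (by positivity) (by nlinarith)
  have hψN : 0 ≤ ψ N := by
    simp only [hψ]
    split_ifs with h
    · have : (N : ℝ) ≤ m := by exact_mod_cast h
      apply div_nonneg <;> nlinarith
    · positivity
  calc ∑ n ∈ range N, (((max m (n + 1) : ℕ) : ℝ) ^ 2)⁻¹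
      ≤ ∑ n ∈ range N, (ψ n - ψ (n + 1)) := sum_le_sum fun n _ => hstep n
    _ = ψ 0 - ψ N := sum_range_sub' ψ N
    _ ≤ 2 / m := by
        have : ψ 0 = 2 / m := by simp only [hψ, zero_le, if_true]; field_simp; ring
        linarith

lemma summable_inv_max_sq (m : ℕ+) :
    Summable fun n : ℕ+ => (((max (m : ℕ) n : ℕ) : ℝ) ^ 2)⁻¹ :=
  summable_pnat_iff_summable_succ (f := fun n => (((max (m : ℕ) n : ℕ) : ℝ) ^ 2)⁻¹) |>.2
    (summable_of_sum_range_le (fun _ => by positivity) (sum_range_inv_max_sq_le m.pos))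

lemma tsum_inv_max_sq_le (m : ℕ+) : ∑' n : ℕ+, (((max (m : ℕ) n : ℕ) : ℝ) ^ 2)⁻¹ ≤ 2 / m := by
  rw [tsum_pnat_eq_tsum_succ (f := fun n => (((max (m : ℕ) n : ℕ) : ℝ) ^ 2)⁻¹)]
  exact Real.tsum_le_of_sum_range_le (fun _ => by positivity) (sum_range_inv_max_sq_le m.pos)

lemma maxKernel_mul_inv_sqrt (m n : ℕ) (hn : 0 < n) :
    maxKernel m n * (√n)⁻¹ = √m * (((max m n : ℕ) : ℝ) ^ 2)⁻¹ := by
  have : 0 < √(n : ℝ) := Real.sqrt_pos.2 (by exact_mod_cast hn)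
  rw [maxKernel, Real.sqrt_mul (Nat.cast_nonneg m)]
  field_simp

noncomputable def quadForm (a : ℕ+ → ℂ) : ℂ := ∑' m, ∑' n, a m * conj (a n) * maxKernel m n

theorem norm_quadForm_le {a : ℕ+ → ℂ} (ha : Summable fun n => ‖a n‖ ^ 2) :
    ‖quadForm a‖ ≤ 2 * ∑' n, ‖a n‖ ^ 2 := by
  refine norm_tsum_tsum_mul_conj_le_of_schur (w := fun n : ℕ+ => (√n)⁻¹) zero_le_two
    (fun _ _ => by unfold maxKernel; positivity)
    (fun m n => by rw [maxKernel, maxKernel, mul_comm, max_comm])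
    (fun n => by simp) (fun m => ?_) (fun m => ?_) ha <;>
  simp only [fun n : ℕ+ => maxKernel_mul_inv_sqrt m n n.pos]
  · exact (summable_inv_max_sq m).mul_left _
  · have hm : (0 : ℝ) < m := by exact_mod_cast m.pos
    rw [tsum_mul_left]
    calc √(m : ℝ) * ∑' n : ℕ+, (((max (m : ℕ) n : ℕ) : ℝ) ^ 2)⁻¹ ≤ √(m : ℝ) * (2 / m) := by
          gcongr; exact tsum_inv_max_sq_le m
      _ = 2 * (√(m : ℝ))⁻¹ := by
          have hs : 0 < √(m : ℝ) := Real.sqrt_pos.2 hm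
          field_simp
          rw [Real.sq_sqrt hm.le]

lemma sum_range_sum_range_max {R : Type*} [CommSemiring R] (f : ℕ → R) (N : ℕ) :
    ∑ i ∈ range N, ∑ j ∈ range N, f (max i j) = ∑ k ∈ range N, (2 * k + 1) * f k := by
  induction N with
  | zero => simp
  | succ N ih =>
    have hrow : ∀ i ∈ range N, ∑ j ∈ range (N + 1), f (max i j)
        = ∑ j ∈ range N, f (max i j) + f N := fun i hi => by
      rw [sum_range_succ, max_eq_right (mem_range.1 hi).le]
    have hlast : ∑ j ∈ range (N + 1), f (max N j) = (N + 1) * f N := by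
      rw [sum_congr rfl fun j hj => by rw [max_eq_left (Nat.lt_succ_iff.1 (mem_range.1 hj))]]
      simp
    rw [sum_range_succ, sum_congr rfl hrow, sum_add_distrib, ih, hlast, sum_range_succ]
    simp only [sum_const, card_range, nsmul_eq_mul]
    ring

lemma tsum_pnat_eq_sum_range {M : Type*} [AddCommMonoid M] [TopologicalSpace M] {f : ℕ → M}
    {N : ℕ} (hf : ∀ n, N < n → f n = 0) : ∑' n : ℕ+, f n = ∑ k ∈ range N, f (k + 1) := by
  rw [tsum_pnat_eq_tsum_succ]
  exact tsum_eq_sum fun k hk => hf _ (by simpa using hk)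

noncomputable def testVector (N n : ℕ) : ℂ := if n ≤ N then ((√(n : ℝ))⁻¹ : ℝ) else 0

lemma testVector_of_lt {N n : ℕ} (h : N < n) : testVector N n = 0 := if_neg h.not_ge

lemma summable_norm_testVector_sq (N : ℕ) : Summable fun n : ℕ+ => ‖testVector N n‖ ^ 2 :=
  summable_pnat_iff_summable_succ (f := fun n => ‖testVector N n‖ ^ 2) |>.2 <|
    summable_of_ne_finset_zero (s := range N) fun k hk => by
      simp [testVector_of_lt (show N < k + 1 by simpa using hk)]

lemma tsum_norm_testVector_sq (N : ℕ) :
    ∑' n : ℕ+, ‖testVector N n‖ ^ 2 = ∑ k ∈ range N, 1 / ((k : ℝ) + 1) := by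
  have hvanish : ∀ n, N < n → ‖testVector N n‖ ^ 2 = 0 := fun n hn => by
    rw [testVector_of_lt hn, norm_zero, sq, zero_mul]
  rw [tsum_pnat_eq_sum_range (f := fun n => ‖testVector N n‖ ^ 2) hvanish]
  refine sum_congr rfl fun k hk => ?_
  rw [testVector, if_pos (by simpa using hk), Complex.norm_real, Real.norm_eq_abs, sq_abs, inv_pow,
    Real.sq_sqrt (by positivity), one_div]
  push_cast
  ring

lemma testVector_mul_conj_mul_maxKernel {N m n : ℕ} (hm : 0 < m) (hn : 0 < n) (hmN : m ≤ N)
    (hnN : n ≤ N) :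
    testVector N m * conj (testVector N n) * maxKernel m n = ((((max m n : ℕ) : ℝ) ^ 2)⁻¹ : ℝ) := by
  have hm' : 0 < √(m : ℝ) := Real.sqrt_pos.2 (by exact_mod_cast hm)
  have hn' : 0 < √(n : ℝ) := Real.sqrt_pos.2 (by exact_mod_cast hn)
  rw [testVector, testVector, if_pos hmN, if_pos hnN, Complex.conj_ofReal, ← Complex.ofReal_mul,
    ← Complex.ofReal_mul, maxKernel, Real.sqrt_mul (Nat.cast_nonneg m)]
  congr 1
  field_simp

lemma quadForm_testVector (N : ℕ) :
    quadForm (fun n => testVector N n)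
      = ((∑ k ∈ range N, (2 * k + 1) / ((k : ℝ) + 1) ^ 2 : ℝ) : ℂ) := by
  have hinner : ∀ m : ℕ, ∑' n : ℕ+, testVector N m * conj (testVector N n) * maxKernel m n
      = ∑ j ∈ range N, testVector N m * conj (testVector N (j + 1)) * maxKernel m (j + 1) :=
    fun m => tsum_pnat_eq_sum_range
      (f := fun n => testVector N m * conj (testVector N n) * maxKernel m n)
      fun n hn => by rw [testVector_of_lt hn, map_zero, mul_zero, zero_mul]
  rw [quadForm, tsum_congr fun m : ℕ+ => hinner m, tsum_pnat_eq_sum_range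
    (f := fun m =>
      ∑ j ∈ range N, testVector N m * conj (testVector N (j + 1)) * maxKernel m (j + 1))
    fun m hm => by rw [testVector_of_lt hm]; simp only [zero_mul, sum_const_zero]]
  rw [sum_congr rfl fun i hi => sum_congr rfl fun j hj => testVector_mul_conj_mul_maxKernel
    (m := i + 1) (n := j + 1) (by omega) (by omega) (mem_range.1 hi) (mem_range.1 hj)]
  simp only [max_add_add_right, ← Complex.ofReal_sum]
  rw [sum_range_sum_range_max (fun k => (((k + 1 : ℕ) : ℝ) ^ 2)⁻¹)]
  push_cast
  simp only [div_eq_mul_inv]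

lemma tendsto_norm_quadForm_testVector_div :
    Tendsto (fun N => ‖quadForm (fun n => testVector N n)‖ / ∑' n : ℕ+, ‖testVector N n‖ ^ 2)
      atTop (𝓝 2) := by
  set H : ℕ → ℝ := fun N => ∑ k ∈ range N, 1 / ((k : ℝ) + 1)
  set C : ℕ → ℝ := fun N => ∑ k ∈ range N, 1 / ((k : ℝ) + 1) ^ 2
  have hH : Tendsto H atTop atTop := Real.tendsto_sum_range_one_div_nat_succ_atTop
  have hC : Tendsto C atTop (𝓝 (∑' k : ℕ, 1 / ((k : ℝ) + 1) ^ 2)) := by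
    refine Summable.tendsto_sum_tsum_nat ?_
    exact_mod_cast (summable_nat_add_iff 1).2 (Real.summable_one_div_nat_pow.2 one_lt_two)
  have hquad : ∀ N, ‖quadForm (fun n => testVector N n)‖ = 2 * H N - C N := by
    intro N
    rw [quadForm_testVector, Complex.norm_real, Real.norm_of_nonneg (by positivity), mul_sum,
      ← sum_sub_distrib]
    refine sum_congr rfl fun k _ => ?_
    field_simp
    ring
  have hlim := (tendsto_const_nhds (x := (2 : ℝ))).sub (hC.div_atTop hH)
  rw [sub_zero] at hlim
  refine hlim.congr' ?_
  filter_upwards [hH.eventually_gt_atTop 0] with N hN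
  rw [hquad, tsum_norm_testVector_sq]
  change _ = _ / H N
  field_simp

theorem stmt8 :
    (∀ C : ℝ, 0 ≤ C →
      (∀ a : ℕ+ → ℂ, Summable (fun n => ‖a n‖ ^ 2) →
        ‖∑' m : ℕ+, ∑' n : ℕ+, a m * (starRingEnd ℂ) (a n) *
            ((Real.sqrt ((m : ℝ) * (n : ℝ)) / ((max (m : ℕ) (n : ℕ) : ℕ) : ℝ) ^ 2 : ℝ) : ℂ)‖
          ≤ C ^ 2 * ∑' n : ℕ+, ‖a n‖ ^ 2) →
      Real.sqrt 2 ≤ C) ∧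
    sSup {r : ℝ | ∃ a : ℕ+ → ℂ, Summable (fun n => ‖a n‖ ^ 2) ∧ a ≠ 0 ∧
        r = ‖∑' m : ℕ+, ∑' n : ℕ+, a m * (starRingEnd ℂ) (a n) *
            ((Real.sqrt ((m : ℝ) * (n : ℝ)) / ((max (m : ℕ) (n : ℕ) : ℕ) : ℝ) ^ 2 : ℝ) : ℂ)‖
          / ∑' n : ℕ+, ‖a n‖ ^ 2} = 2 := by
  change (∀ C : ℝ, 0 ≤ C → (∀ a : ℕ+ → ℂ, Summable (fun n => ‖a n‖ ^ 2) →
      ‖quadForm a‖ ≤ C ^ 2 * ∑' n, ‖a n‖ ^ 2) → √2 ≤ C) ∧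
    sSup {r : ℝ | ∃ a : ℕ+ → ℂ, Summable (fun n => ‖a n‖ ^ 2) ∧ a ≠ 0 ∧
      r = ‖quadForm a‖ / ∑' n, ‖a n‖ ^ 2} = 2
  have hlim := tendsto_norm_quadForm_testVector_div
  have hpos : ∀ᶠ N in atTop, 0 < ∑' n : ℕ+, ‖testVector N n‖ ^ 2 := by
    simp only [tsum_norm_testVector_sq]
    exact Real.tendsto_sum_range_one_div_nat_succ_atTop.eventually_gt_atTop 0
  refine ⟨fun C hC hbound => ?_, ?_⟩
  · have hC2 : 2 ≤ C ^ 2 := le_of_tendsto hlim <| hpos.mono fun N hN =>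
      (div_le_iff₀ hN).2 (hbound _ (summable_norm_testVector_sq N))
    simpa [Real.sqrt_sq hC] using Real.sqrt_le_sqrt hC2
  · set S := {r : ℝ | ∃ a : ℕ+ → ℂ, Summable (fun n => ‖a n‖ ^ 2) ∧ a ≠ 0 ∧
      r = ‖quadForm a‖ / ∑' n, ‖a n‖ ^ 2}
    have hle : ∀ r ∈ S, r ≤ 2 := by
      rintro r ⟨a, ha, -, rfl⟩
      exact div_le_of_le_mul₀ (by positivity) zero_le_two (norm_quadForm_le ha)
    have hmem : ∀ᶠ N in atTop, ‖quadForm (fun n => testVector N n)‖ /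
        ∑' n : ℕ+, ‖testVector N n‖ ^ 2 ∈ S := hpos.mono fun N hN =>
      ⟨_, summable_norm_testVector_sq N,
        ne_of_apply_ne (fun a : ℕ+ → ℂ => ∑' n, ‖a n‖ ^ 2) (by simpa using hN.ne'), rfl⟩
    obtain ⟨N, hN⟩ := hmem.exists
    exact le_antisymm (csSup_le ⟨_, hN⟩ hle)
      (le_of_tendsto hlim (hmem.mono fun N hN => le_csSup ⟨2, hle⟩ hN))
end

section
/- For every ε > 0, with a_n = n^{-1/2-ε}, one has ∑_{m=1}^∞ ∑_{n=1}^∞ a_m a_n √(mn)/[max(m,n)]² = ∑_{m=1}^∞ m^{-ε}( (1/m²)∑_{n=1}^m n^{-ε} + ∑_{n=m+1}^∞ n^{-2-ε} ) > (ζ(1+2ε) − ζ(2+ε))/(1−ε) + (ζ(1+2ε) − 1)/(1+ε), where ζ is the Riemann zeta function (assume ε < 1 for the first fraction). -/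
open Real Finset Filter

noncomputable def zetaR (s : ℝ) : ℝ := ∑' n : ℕ+, (n : ℝ) ^ (-s)

/-!
After cancelling `√(mn)` the general term is `m^{-ε} n^{-ε} / max(m,n)²`, which is dominated by
`(mn)^{-1-ε}`; so the double series converges and may be summed row by row, and splitting row `m`
at `n = m` gives the identity. For the inequality each row is bounded below. Concavity of
`t ↦ t^{1-ε}` (Bernoulli) gives `(k+1)^{1-ε} - k^{1-ε} ≤ (1-ε) k^{-ε}`, hence
`∑_{n ≤ m} n^{-ε} ≥ ((m+1)^{1-ε} - 1)/(1-ε) > (m^{1-ε} - 1)/(1-ε)`; convexity of `t ↦ t^{-1-ε}`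
gives `t^{-1-ε} - (t+1)^{-1-ε} ≤ (1+ε) t^{-2-ε}`, which telescopes to
`∑_{n > m} n^{-2-ε} ≥ (m+1)^{-1-ε}/(1+ε)`. Summing these lower bounds over `m` yields the
`ζ`-expression, and the first bound is strict.
-/

lemma add_one_rpow_le_rpow_add_mul_rpow_sub_one {x p : ℝ} (hx : 0 < x) (hp0 : 0 ≤ p) (hp1 : p ≤ 1) :
    (x + 1) ^ p ≤ x ^ p + p * x ^ (p - 1) := by
  have hbern : (1 + x⁻¹) ^ p ≤ 1 + p * x⁻¹ :=
    rpow_one_add_le_one_add_mul_self (by linarith [inv_pos.2 hx]) hp0 hp1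
  calc (x + 1) ^ p = x ^ p * (1 + x⁻¹) ^ p := by
        rw [← mul_rpow hx.le (by positivity), mul_add, mul_inv_cancel₀ hx.ne', mul_one]
    _ ≤ x ^ p * (1 + p * x⁻¹) := by gcongr
    _ = x ^ p + p * x ^ (p - 1) := by rw [rpow_sub_one hx.ne']; ring

lemma rpow_neg_sub_add_one_rpow_neg_le_mul {x q : ℝ} (hx : 0 < x) (hq : 1 ≤ q) :
    x ^ (-q) - (x + 1) ^ (-q) ≤ q * x ^ (-q - 1) := by
  have hx1 : 0 < x + 1 := by linarith
  have hbern : 1 + q * -(x + 1)⁻¹ ≤ (1 + -(x + 1)⁻¹) ^ q :=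
    one_add_mul_self_le_rpow_one_add
      (by rw [neg_le_neg_iff]; exact inv_le_one_of_one_le₀ (by linarith)) hq
  have hratio : (1 + -(x + 1)⁻¹) ^ q = x ^ q * (x + 1) ^ (-q) := by
    rw [show 1 + -(x + 1)⁻¹ = x * (x + 1)⁻¹ by field_simp; ring, mul_rpow hx.le (by positivity),
      inv_rpow hx1.le, rpow_neg hx1.le]
  calc x ^ (-q) - (x + 1) ^ (-q) = x ^ (-q) * (1 - x ^ q * (x + 1) ^ (-q)) := by
        rw [mul_sub, ← mul_assoc, ← rpow_add hx]; simp
    _ ≤ x ^ (-q) * (q * (x + 1)⁻¹) := by gcongr; linarith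
    _ ≤ x ^ (-q) * (q * x⁻¹) := by gcongr; linarith
    _ = q * x ^ (-q - 1) := by rw [rpow_sub_one hx.ne']; ring

lemma add_one_rpow_sub_one_le_mul_sum {p : ℝ} (hp0 : 0 ≤ p) (hp1 : p ≤ 1) (M : ℕ) :
    ((M : ℝ) + 1) ^ p - 1 ≤ p * ∑ n ∈ Icc 1 M, (n : ℝ) ^ (p - 1) := by
  induction M with
  | zero => simp
  | succ M ih =>
    have hstep :=
      add_one_rpow_le_rpow_add_mul_rpow_sub_one (x := (M : ℝ) + 1) (by positivity) hp0 hp1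
    rw [sum_Icc_succ_top (by omega), mul_add]
    push_cast
    linarith

lemma summable_add_nat_rpow {c s : ℝ} (hc : 0 < c) (hs : s < -1) :
    Summable fun k : ℕ => (c + k) ^ s := by
  have h := (Real.summable_one_div_nat_add_rpow c (-s)).2 (by linarith)
  refine h.congr fun k => ?_
  rw [abs_of_pos (by positivity), one_div, ← rpow_neg (by positivity), neg_neg, add_comm]

lemma rpow_neg_le_mul_tsum_add_nat_rpow {c q : ℝ} (hc : 0 < c) (hq : 1 ≤ q) :
    c ^ (-q) ≤ q * ∑' k : ℕ, (c + k) ^ (-q - 1) := by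
  set u : ℕ → ℝ := fun k => (c + k) ^ (-q)
  have hsum := (summable_add_nat_rpow hc (s := -q - 1) (by linarith)).mul_left q
  have hpartial : ∀ N, u 0 - u N ≤ ∑ k ∈ range N, q * (c + k) ^ (-q - 1) := fun N => by
    rw [← sum_range_sub']
    refine sum_le_sum fun k _ => ?_
    have := rpow_neg_sub_add_one_rpow_neg_le_mul (x := c + k) (by positivity) hq
    simp only [u]; push_cast; rwa [← add_assoc]
  have hu : Tendsto u atTop (nhds 0) :=
    (tendsto_rpow_neg_atTop (by linarith)).comp
      (tendsto_atTop_add_const_left _ c tendsto_natCast_atTop_atTop)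
  have := le_of_tendsto_of_tendsto' (tendsto_const_nhds.sub hu) hsum.tendsto_sum_tsum_nat hpartial
  simpa [u, tsum_mul_left] using this

lemma summable_pnat_rpow {s : ℝ} (hs : s < -1) : Summable fun n : ℕ+ => (n : ℝ) ^ s :=
  summable_pnat_iff_summable_nat.2 (summable_nat_rpow.2 hs)

lemma hasSum_zetaR {s : ℝ} (hs : 1 < s) : HasSum (fun n : ℕ+ => (n : ℝ) ^ (-s)) (zetaR s) :=
  (summable_pnat_rpow (by linarith)).hasSum

lemma hasSum_pnat_add_one_rpow {s : ℝ} (hs : 1 < s) :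
    HasSum (fun n : ℕ+ => ((n : ℝ) + 1) ^ (-s)) (zetaR s - 1) := by
  have hg : Summable fun n : ℕ => ((n : ℝ) + 1) ^ (-s) := by
    exact_mod_cast (summable_nat_add_iff 1).2 (summable_nat_rpow.2 (by linarith : -s < -1))
  rw [hasSum_pnat_iff (f := fun n : ℕ => ((n : ℝ) + 1) ^ (-s)), Nat.cast_zero, zero_add, one_rpow,
    sub_add_cancel, zetaR, tsum_pnat_eq_tsum_succ (f := fun n : ℕ => (n : ℝ) ^ (-s))]
  exact_mod_cast hg.hasSum

lemma rpow_mul_rpow_mul_sqrt_div {x y : ℝ} (hx : 0 < x) (hy : 0 < y) (ε M : ℝ) :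
    x ^ (-(1 / 2 : ℝ) - ε) * y ^ (-(1 / 2 : ℝ) - ε) * (√(x * y) / M)
      = x ^ (-ε) * (y ^ (-ε) / M) := by
  have key : ∀ {z : ℝ}, 0 < z → z ^ (-(1 / 2 : ℝ) - ε) * √z = z ^ (-ε) := fun hz => by
    rw [sqrt_eq_rpow, ← rpow_add hz]; ring_nf
  rw [sqrt_mul hx.le, ← key hx, ← key hy]
  ring

section

variable {ε : ℝ}

lemma tsum_pnat_rpow_div_max_sq (hε : -1 < ε) (m : ℕ) :
    ∑' n : ℕ+, (n : ℝ) ^ (-ε) / ((max m n : ℕ) : ℝ) ^ 2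
      = 1 / (m : ℝ) ^ 2 * ∑ n ∈ Icc 1 m, (n : ℝ) ^ (-ε)
        + ∑' k : ℕ, ((m : ℝ) + 1 + k) ^ (-2 - ε) := by
  set f : ℕ → ℝ := fun n => (n : ℝ) ^ (-ε) / ((max m n : ℕ) : ℝ) ^ 2
  have hf : Summable fun k => f (k + 1) := by
    refine (summable_add_nat_rpow one_pos (s := -ε - 2) (by linarith)).of_nonneg_of_le
      (fun k => by positivity) fun k => ?_
    have hk : (0 : ℝ) < k + 1 := by positivity
    simp only [f]; push_cast
    rw [add_comm 1, rpow_sub hk, rpow_two]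
    gcongr
    exact le_max_right _ _
  rw [tsum_pnat_eq_tsum_succ (f := f), ← hf.sum_add_tsum_nat_add m]
  congr 1
  · rw [range_eq_Ico, sum_Ico_add' (fun n => f n), zero_add, Ico_add_one_right_eq_Icc, mul_sum]
    refine sum_congr rfl fun n hn => ?_
    simp only [f, max_eq_left (mem_Icc.1 hn).2]
    ring
  · refine tsum_congr fun k => ?_
    have hk : (0 : ℝ) < m + 1 + k := by positivity
    simp only [f, max_eq_right (show m ≤ k + m + 1 by omega)]
    push_cast
    rw [show (k : ℝ) + m + 1 = m + 1 + k by ring, show -2 - ε = -ε - 2 by ring, rpow_sub hk,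
      rpow_two]

lemma summable_rpow_mul_rpow_div_max_sq (hε : 0 < ε) :
    Summable fun p : ℕ+ × ℕ+ =>
      (p.1 : ℝ) ^ (-ε) * ((p.2 : ℝ) ^ (-ε) / ((max (p.1 : ℕ) p.2 : ℕ) : ℝ) ^ 2) := by
  have hs := summable_pnat_rpow (s := -ε - 1) (by linarith)
  refine (hs.mul_of_nonneg hs (fun _ => by positivity) fun _ => by positivity).of_nonneg_of_le
    (fun _ => by positivity) fun ⟨m, n⟩ => ?_
  have hm : (0 : ℝ) < m := by positivity
  have hn : (0 : ℝ) < n := by positivity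
  have hmax : (m : ℝ) * n ≤ ((max (m : ℕ) n : ℕ) : ℝ) ^ 2 := by
    push_cast
    rw [sq]
    exact mul_le_mul (le_max_left _ _) (le_max_right _ _) hn.le (hm.le.trans (le_max_left _ _))
  calc (m : ℝ) ^ (-ε) * ((n : ℝ) ^ (-ε) / ((max (m : ℕ) n : ℕ) : ℝ) ^ 2)
      ≤ (m : ℝ) ^ (-ε) * ((n : ℝ) ^ (-ε) / (m * n)) := by gcongr
    _ = (m : ℝ) ^ (-ε - 1) * (n : ℝ) ^ (-ε - 1) := by
        rw [rpow_sub_one hm.ne', rpow_sub_one hn.ne']; ring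

lemma rpow_sub_rpow_div_lt_mul_sum (hε0 : 0 ≤ ε) (hε1 : ε < 1) {m : ℕ} (hm : 0 < m) :
    ((m : ℝ) ^ (-(1 + 2 * ε)) - (m : ℝ) ^ (-(2 + ε))) / (1 - ε)
      < (m : ℝ) ^ (-ε) * (1 / (m : ℝ) ^ 2 * ∑ n ∈ Icc 1 m, (n : ℝ) ^ (-ε)) := by
  have hx : (0 : ℝ) < m := by exact_mod_cast hm
  have hS := add_one_rpow_sub_one_le_mul_sum (p := 1 - ε) (by linarith) (by linarith) m
  rw [show 1 - ε - 1 = -ε by ring] at hS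
  have hmono : (m : ℝ) ^ (1 - ε) < ((m : ℝ) + 1) ^ (1 - ε) :=
    rpow_lt_rpow hx.le (by linarith) (by linarith)
  calc ((m : ℝ) ^ (-(1 + 2 * ε)) - (m : ℝ) ^ (-(2 + ε))) / (1 - ε)
      = (m : ℝ) ^ (-ε) / (m : ℝ) ^ 2 * (((m : ℝ) ^ (1 - ε) - 1) / (1 - ε)) := by
        rw [show -(1 + 2 * ε) = -ε - 2 + (1 - ε) by ring, show -(2 + ε) = -ε - 2 by ring,
          rpow_add hx, rpow_sub hx, rpow_two]
        ring
    _ < (m : ℝ) ^ (-ε) / (m : ℝ) ^ 2 * ((((m : ℝ) + 1) ^ (1 - ε) - 1) / (1 - ε)) := by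
        gcongr
    _ ≤ (m : ℝ) ^ (-ε) / (m : ℝ) ^ 2 * ∑ n ∈ Icc 1 m, (n : ℝ) ^ (-ε) := by
        gcongr; rw [div_le_iff₀ (by linarith)]; linarith
    _ = _ := by ring

lemma add_one_rpow_div_le_mul_tsum (hε : 0 ≤ ε) {m : ℕ} (hm : 0 < m) :
    ((m : ℝ) + 1) ^ (-(1 + 2 * ε)) / (1 + ε)
      ≤ (m : ℝ) ^ (-ε) * ∑' k : ℕ, ((m : ℝ) + 1 + k) ^ (-2 - ε) := by
  have hx : (0 : ℝ) < m := by exact_mod_cast hm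
  have hT :=
    rpow_neg_le_mul_tsum_add_nat_rpow (c := (m : ℝ) + 1) (q := 1 + ε) (by positivity) (by linarith)
  rw [show -(1 + ε) - 1 = -2 - ε by ring] at hT
  calc ((m : ℝ) + 1) ^ (-(1 + 2 * ε)) / (1 + ε)
      = ((m : ℝ) + 1) ^ (-ε) * (((m : ℝ) + 1) ^ (-(1 + ε)) / (1 + ε)) := by
        rw [← mul_div_assoc, ← rpow_add (by positivity)]; ring_nf
    _ ≤ (m : ℝ) ^ (-ε) * ∑' k : ℕ, ((m : ℝ) + 1 + k) ^ (-2 - ε) := by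
        gcongr ?_ * ?_
        · exact rpow_le_rpow_of_nonpos hx (by linarith) (by linarith)
        · rw [div_le_iff₀ (by linarith)]; linarith

noncomputable def maxKernelRow (ε : ℝ) (m : ℕ) : ℝ :=
  (m : ℝ) ^ (-ε) * (1 / (m : ℝ) ^ 2 * ∑ n ∈ Icc 1 m, (n : ℝ) ^ (-ε)
    + ∑' k : ℕ, ((m : ℝ) + 1 + k) ^ (-2 - ε))

noncomputable def rowMinorant (ε : ℝ) (m : ℕ) : ℝ :=
  ((m : ℝ) ^ (-(1 + 2 * ε)) - (m : ℝ) ^ (-(2 + ε))) / (1 - ε)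
    + ((m : ℝ) + 1) ^ (-(1 + 2 * ε)) / (1 + ε)

lemma tsum_pnat_eq_maxKernelRow (hε : -1 < ε) (m : ℕ) :
    ∑' n : ℕ+, (m : ℝ) ^ (-ε) * ((n : ℝ) ^ (-ε) / ((max m n : ℕ) : ℝ) ^ 2) = maxKernelRow ε m := by
  rw [tsum_mul_left, tsum_pnat_rpow_div_max_sq hε]
  rfl

lemma summable_maxKernelRow (hε : 0 < ε) : Summable fun m : ℕ+ => maxKernelRow ε m :=
  (summable_rpow_mul_rpow_div_max_sq hε).prod.congr fun m =>
    tsum_pnat_eq_maxKernelRow (by linarith) m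

lemma rowMinorant_lt_maxKernelRow (hε0 : 0 ≤ ε) (hε1 : ε < 1) {m : ℕ} (hm : 0 < m) :
    rowMinorant ε m < maxKernelRow ε m := by
  rw [rowMinorant, maxKernelRow, mul_add]
  exact add_lt_add_of_lt_of_le (rpow_sub_rpow_div_lt_mul_sum hε0 hε1 hm)
    (add_one_rpow_div_le_mul_tsum hε0 hm)

lemma hasSum_rowMinorant (hε : 0 < ε) :
    HasSum (fun m : ℕ+ => rowMinorant ε m)
      ((zetaR (1 + 2 * ε) - zetaR (2 + ε)) / (1 - ε) + (zetaR (1 + 2 * ε) - 1) / (1 + ε)) :=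
  (((hasSum_zetaR (by linarith)).sub (hasSum_zetaR (by linarith))).div_const _).add
    ((hasSum_pnat_add_one_rpow (by linarith)).div_const _)

end

theorem stmt9 (ε : ℝ) (hε : 0 < ε) (hε1 : ε < 1) :
    (∑' m : ℕ+, ∑' n : ℕ+, (m : ℝ) ^ (-(1 / 2 : ℝ) - ε) * (n : ℝ) ^ (-(1 / 2 : ℝ) - ε) *
        (Real.sqrt ((m : ℝ) * (n : ℝ)) / ((max (m : ℕ) (n : ℕ) : ℕ) : ℝ) ^ 2))
      = ∑' m : ℕ+, (m : ℝ) ^ (-ε) *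
          ((1 / (m : ℝ) ^ 2) * ∑ n ∈ Finset.Icc 1 (m : ℕ), (n : ℝ) ^ (-ε)
            + ∑' n : ℕ, ((m : ℝ) + 1 + (n : ℝ)) ^ (-2 - ε)) ∧
    (∑' m : ℕ+, ∑' n : ℕ+, (m : ℝ) ^ (-(1 / 2 : ℝ) - ε) * (n : ℝ) ^ (-(1 / 2 : ℝ) - ε) *
        (Real.sqrt ((m : ℝ) * (n : ℝ)) / ((max (m : ℕ) (n : ℕ) : ℕ) : ℝ) ^ 2))
      > (zetaR (1 + 2 * ε) - zetaR (2 + ε)) / (1 - ε) + (zetaR (1 + 2 * ε) - 1) / (1 + ε) := by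
  have hrow : ∀ m : ℕ+, ∑' n : ℕ+, (m : ℝ) ^ (-(1 / 2 : ℝ) - ε) * (n : ℝ) ^ (-(1 / 2 : ℝ) - ε) *
      (√((m : ℝ) * n) / ((max (m : ℕ) (n : ℕ) : ℕ) : ℝ) ^ 2) = maxKernelRow ε m := fun m => by
    rw [← tsum_pnat_eq_maxKernelRow (by linarith)]
    exact tsum_congr fun n => rpow_mul_rpow_mul_sqrt_div (by positivity) (by positivity) _ _
  refine ⟨tsum_congr hrow, ?_⟩
  rw [tsum_congr hrow, gt_iff_lt]
  exact hasSum_lt (fun m => (rowMinorant_lt_maxKernelRow hε.le hε1 m.pos).le)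
    (rowMinorant_lt_maxKernelRow hε.le hε1 (1 : ℕ+).pos) (hasSum_rowMinorant hε)
    (summable_maxKernelRow hε).hasSum
end

section
/- There is no constant C < √2 such that (1/π)∫_{-∞}^∞ |ζ(1+ε+it)|² dt/(1+t²) ≤ C²·ζ(1+2ε) holds for all ε ∈ (0, 1/2). -/
/-!
Near `s = 1` we have `ζ(s) = 1/(s - 1) + O(1)`, so for `|t| ≤ √ε` the integrand is at least
`(1/(ε² + t²) - O(1/ε)) / (1 + ε)`. Integrating over `[-√ε, √ε]` gives
`∫ |ζ(1+ε+it)|² dt/(1+t²) ≥ (2 arctan(1/√ε) - O(√ε)) / (ε(1+ε)) ~ π/ε`, whereas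
`ζ(1 + 2ε) ~ 1/(2ε)`. Multiplying by `ε` and letting `ε → 0⁺` forces `1 ≤ C²/2`.
-/

open MeasureTheory Real

open Filter Topology

lemma summable_pnat_rpow_neg {x : ℝ} (hx : 1 < x) : Summable fun n : ℕ+ ↦ (n : ℝ) ^ (-x) :=
  summable_pnat_iff_summable_nat.mpr (Real.summable_nat_rpow.mpr (by linarith))

lemma riemannZeta_eq_tsum_pnat_cpow_neg {s : ℂ} (hs : 1 < s.re) :
    riemannZeta s = ∑' n : ℕ+, (n : ℂ) ^ (-s) := by
  rw [zeta_eq_tsum_one_div_nat_add_one_cpow hs,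
    tsum_pnat_eq_tsum_succ (f := fun n : ℕ ↦ (n : ℂ) ^ (-s))]
  simp [Complex.cpow_neg]

lemma ofReal_zetaR {x : ℝ} (hx : 1 < x) : (zetaR x : ℂ) = riemannZeta x := by
  rw [riemannZeta_eq_tsum_pnat_cpow_neg (by simpa using hx), zetaR, Complex.ofReal_tsum]
  congr 1 with n
  rw [Complex.ofReal_cpow (Nat.cast_nonneg _)]
  simp

lemma norm_riemannZeta_le_zetaR_re {s : ℂ} (hs : 1 < s.re) : ‖riemannZeta s‖ ≤ zetaR s.re := by
  have hnorm (n : ℕ+) : ‖(n : ℂ) ^ (-s)‖ = (n : ℝ) ^ (-s.re) := by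
    simpa using Complex.norm_natCast_cpow_of_pos n.pos (-s)
  rw [riemannZeta_eq_tsum_pnat_cpow_neg hs, zetaR, ← tsum_congr hnorm]
  exact norm_tsum_le_tsum_norm (by simpa only [hnorm] using summable_pnat_rpow_neg hs)

lemma tendsto_sub_one_mul_zetaR : Tendsto (fun x ↦ (x - 1) * zetaR x) (𝓝[>] 1) (𝓝 1) := by
  have hofReal : Tendsto (fun x : ℝ ↦ (x : ℂ)) (𝓝[>] 1) (𝓝[≠] 1) :=
    tendsto_nhdsWithin_of_tendsto_nhds_of_eventually_within _
      (Complex.continuous_ofReal.tendsto' 1 1 Complex.ofReal_one |>.mono_left nhdsWithin_le_nhds)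
      (eventually_nhdsWithin_of_forall fun x hx ↦ by simpa using hx.ne')
  have h := (Complex.continuous_re.tendsto 1).comp (riemannZeta_residue_one.comp hofReal)
  refine (h.congr' ?_).trans (by simp)
  filter_upwards [self_mem_nhdsWithin] with x hx
  simp [← ofReal_zetaR hx]

lemma tendsto_mul_zetaR_one_add_two_mul :
    Tendsto (fun ε ↦ ε * zetaR (1 + 2 * ε)) (𝓝[>] 0) (𝓝 (1 / 2)) := by
  have hmap : Tendsto (fun ε : ℝ ↦ 1 + 2 * ε) (𝓝[>] 0) (𝓝[>] 1) :=
    tendsto_nhdsWithin_of_tendsto_nhds_of_eventually_within _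
      ((Continuous.tendsto' (by fun_prop) 0 1 (by simp)).mono_left nhdsWithin_le_nhds)
      (eventually_nhdsWithin_of_forall fun ε (hε : 0 < ε) ↦ by simp [hε])
  convert (tendsto_sub_one_mul_zetaR.comp hmap).div_const 2 using 2 with ε
  simp only [Function.comp_apply]
  ring

lemma sq_norm_sub_two_mul_norm_le_sq_norm {E : Type*} [SeminormedAddCommGroup E] {z w : E} {A : ℝ}
    (h : ‖z - w‖ ≤ A) : ‖w‖ ^ 2 - 2 * A * ‖w‖ ≤ ‖z‖ ^ 2 := by
  have hz : ‖w‖ - A ≤ ‖z‖ := by linarith [norm_sub_norm_le w z, norm_sub_rev z w]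
  rcases le_total A ‖w‖ with hw | hw
  · nlinarith [sq_nonneg A]
  · nlinarith [norm_nonneg z, norm_nonneg w, norm_nonneg (z - w)]

lemma exists_norm_riemannZeta_sub_inv_le :
    ∃ A, ∀ s ∈ Metric.closedBall (1 : ℂ) 1, s ≠ 1 → ‖riemannZeta s - (s - 1)⁻¹‖ ≤ A := by
  obtain ⟨A, hA⟩ := (isCompact_closedBall (1 : ℂ) 1).exists_bound_of_continuousOn
    differentiable_riemannZeta₀.continuous.continuousOn
  exact ⟨A, fun s hs hs1 ↦ by simpa [riemannZeta₀, hs1] using hA s hs⟩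

lemma continuous_riemannZeta_add_I_mul {s₀ : ℂ} (hs₀ : s₀.re ≠ 1) :
    Continuous fun t : ℝ ↦ riemannZeta (s₀ + Complex.I * t) := by
  refine continuous_iff_continuousAt.mpr fun t ↦ ?_
  have hne : s₀ + Complex.I * t ≠ 1 := fun h ↦ hs₀ (by simpa using congrArg Complex.re h)
  exact (differentiableAt_riemannZeta hne).continuousAt.comp (x := t)
    (by fun_prop : Continuous fun t : ℝ ↦ s₀ + Complex.I * t).continuousAt

lemma integrable_norm_riemannZeta_sq_div_one_add_sq {s₀ : ℂ} (hs₀ : 1 < s₀.re) :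
    Integrable fun t : ℝ ↦ ‖riemannZeta (s₀ + Complex.I * t)‖ ^ 2 / (1 + t ^ 2) := by
  refine (integrable_inv_one_add_sq.const_mul (zetaR s₀.re ^ 2)).mono ?_ (ae_of_all _ fun t ↦ ?_)
  · exact (((continuous_riemannZeta_add_I_mul hs₀.ne').norm.pow 2).div (by fun_prop)
      fun t ↦ by positivity).aestronglyMeasurable
  · have hre : (s₀ + Complex.I * t).re = s₀.re := by simp
    have hζ : ‖riemannZeta (s₀ + Complex.I * t)‖ ≤ zetaR s₀.re :=
      hre ▸ norm_riemannZeta_le_zetaR_re (hre ▸ hs₀)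
    rw [norm_of_nonneg (by positivity), norm_of_nonneg (by positivity), div_eq_mul_inv]
    gcongr

lemma div_one_add_le_norm_riemannZeta_sq_div {A ε t : ℝ}
    (hA : ∀ s ∈ Metric.closedBall (1 : ℂ) 1, s ≠ 1 → ‖riemannZeta s - (s - 1)⁻¹‖ ≤ A)
    (hε : 0 < ε) (hε1 : ε < 1 / 2) (ht : t ^ 2 ≤ ε) :
    ((ε ^ 2 + t ^ 2)⁻¹ - 2 * A / ε) / (1 + ε) ≤
      ‖riemannZeta (1 + ε + Complex.I * t)‖ ^ 2 / (1 + t ^ 2) := by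
  set s : ℂ := 1 + ε + Complex.I * t
  have hsub : s - 1 = ε + t * Complex.I := by ring
  have hr2 : ‖s - 1‖ ^ 2 = ε ^ 2 + t ^ 2 := by
    rw [hsub, Complex.sq_norm, Complex.normSq_add_mul_I]
  have hεr : ε ≤ ‖s - 1‖ := abs_le_of_sq_le_sq' (by nlinarith) (norm_nonneg _) |>.2
  have hs1 : s ≠ 1 := by
    intro h
    rw [h, sub_self, norm_zero] at hεr
    linarith
  have hball : s ∈ Metric.closedBall (1 : ℂ) 1 := by
    rw [Metric.mem_closedBall, dist_eq_norm]
    nlinarith [norm_nonneg (s - 1)]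
  have hAs := hA s hball hs1
  have hA0 : 0 ≤ A := (norm_nonneg _).trans hAs
  have hζ : (ε ^ 2 + t ^ 2)⁻¹ - 2 * A / ε ≤ ‖riemannZeta s‖ ^ 2 := by
    have key := sq_norm_sub_two_mul_norm_le_sq_norm hAs
    rw [norm_inv, inv_pow, hr2] at key
    have : 2 * A * ‖s - 1‖⁻¹ ≤ 2 * A / ε := by
      rw [div_eq_mul_inv]
      gcongr
    linarith
  rcases le_total ((ε ^ 2 + t ^ 2)⁻¹ - 2 * A / ε) 0 with hX | hX
  · exact (div_nonpos_of_nonpos_of_nonneg hX (by positivity)).trans (by positivity)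
  · calc ((ε ^ 2 + t ^ 2)⁻¹ - 2 * A / ε) / (1 + ε)
        ≤ ((ε ^ 2 + t ^ 2)⁻¹ - 2 * A / ε) / (1 + t ^ 2) := by gcongr
      _ ≤ ‖riemannZeta s‖ ^ 2 / (1 + t ^ 2) := by gcongr

lemma exists_le_mul_integral_norm_riemannZeta_sq : ∃ A, ∀ ε ∈ Set.Ioo (0 : ℝ) (1 / 2),
    (2 * arctan (1 / √ε) - 4 * A * √ε) / (1 + ε) ≤
      ε * ∫ t : ℝ, ‖riemannZeta (1 + ε + Complex.I * t)‖ ^ 2 / (1 + t ^ 2) := by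
  obtain ⟨A, hA⟩ := exists_norm_riemannZeta_sub_inv_le
  refine ⟨A, fun ε ⟨hε, hε1⟩ ↦ ?_⟩
  set T := √ε
  have hT : 0 < T := sqrt_pos.mpr hε
  have hTε : T / ε = 1 / T := by
    rw [div_eq_div_iff hε.ne' hT.ne', one_mul, mul_self_sqrt hε.le]
  have hint := integrable_norm_riemannZeta_sq_div_one_add_sq (s₀ := 1 + ε) (by simpa using hε)
  have hinv : Continuous fun t : ℝ ↦ (ε ^ 2 + t ^ 2)⁻¹ :=
    (continuous_const.add (continuous_pow 2)).inv₀ fun t ↦ (by positivity : ε ^ 2 + t ^ 2 ≠ 0)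
  have hlower : ∫ t in -T..T, ((ε ^ 2 + t ^ 2)⁻¹ - 2 * A / ε) / (1 + ε) =
      (2 * arctan (1 / T) - 4 * A * T) / (1 + ε) / ε := by
    rw [intervalIntegral.integral_div, intervalIntegral.integral_sub
      (hinv.intervalIntegrable _ _) intervalIntegrable_const, integral_inv_sq_add_sq hε.ne',
      intervalIntegral.integral_const, neg_div, arctan_neg, hTε, smul_eq_mul]
    field_simp
    ring
  have hmono : ∫ t in -T..T, ((ε ^ 2 + t ^ 2)⁻¹ - 2 * A / ε) / (1 + ε) ≤
      ∫ t in -T..T, ‖riemannZeta (1 + ε + Complex.I * t)‖ ^ 2 / (1 + t ^ 2) :=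
    intervalIntegral.integral_mono_on (by linarith)
      (((hinv.sub continuous_const).div_const _).intervalIntegrable _ _)
      hint.intervalIntegrable fun t ht ↦ div_one_add_le_norm_riemannZeta_sq_div hA hε hε1
        ((sq_le_sq' ht.1 ht.2).trans (sq_sqrt hε.le).le)
  have hrestrict : ∫ t in -T..T, ‖riemannZeta (1 + ε + Complex.I * t)‖ ^ 2 / (1 + t ^ 2) ≤
      ∫ t : ℝ, ‖riemannZeta (1 + ε + Complex.I * t)‖ ^ 2 / (1 + t ^ 2) := by
    rw [intervalIntegral.integral_of_le (by linarith)]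
    exact setIntegral_le_integral hint (ae_of_all _ fun t ↦ by positivity)
  rw [← div_le_iff₀' hε, ← hlower]
  exact hmono.trans hrestrict

lemma tendsto_two_mul_arctan_inv_sqrt_sub (A : ℝ) :
    Tendsto (fun ε ↦ (2 * arctan (1 / √ε) - 4 * A * √ε) / (1 + ε)) (𝓝[>] 0) (𝓝 π) := by
  have hsqrt : Tendsto (fun ε ↦ √ε) (𝓝[>] 0) (𝓝 0) :=
    (continuous_sqrt.tendsto' 0 0 sqrt_zero).mono_left nhdsWithin_le_nhds
  have hsqrt_pos : Tendsto (fun ε ↦ √ε) (𝓝[>] 0) (𝓝[>] 0) :=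
    tendsto_nhdsWithin_of_tendsto_nhds_of_eventually_within _ hsqrt
      (eventually_nhdsWithin_of_forall fun _ hε ↦ sqrt_pos.mpr hε)
  have harctan : Tendsto (fun ε ↦ arctan (1 / √ε)) (𝓝[>] 0) (𝓝 (π / 2)) := by
    refine (tendsto_arctan_atTop.mono_right nhdsWithin_le_nhds).comp ?_
    simpa only [one_div, Function.comp_def] using tendsto_inv_nhdsGT_zero.comp hsqrt_pos
  have hid : Tendsto (fun ε : ℝ ↦ ε) (𝓝[>] 0) (𝓝 0) := nhdsWithin_le_nhds
  have h := ((harctan.const_mul 2).sub (hsqrt.const_mul (4 * A))).div (hid.const_add 1)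
    (by norm_num)
  rwa [show (2 * (π / 2) - 4 * A * 0) / (1 + 0) = π by ring] at h

theorem stmt19 :
    ¬ ∃ C : ℝ, 0 ≤ C ∧ C < Real.sqrt 2 ∧
      ∀ ε ∈ Set.Ioo (0 : ℝ) (1 / 2),
        (1 / π) * ∫ t : ℝ, ‖riemannZeta (1 + ε + Complex.I * t)‖ ^ 2 / (1 + t ^ 2)
          ≤ C ^ 2 * zetaR (1 + 2 * ε) := by
  rintro ⟨C, hC0, hC, hbound⟩
  obtain ⟨A, hA⟩ := exists_le_mul_integral_norm_riemannZeta_sq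
  have hle : ∀ᶠ ε in 𝓝[>] 0, (2 * arctan (1 / √ε) - 4 * A * √ε) / (1 + ε) ≤
      π * C ^ 2 * (ε * zetaR (1 + 2 * ε)) := by
    filter_upwards [Ioo_mem_nhdsGT (by norm_num : (0 : ℝ) < 1 / 2)] with ε hε
    calc _ ≤ ε * ∫ t : ℝ, ‖riemannZeta (1 + ε + Complex.I * t)‖ ^ 2 / (1 + t ^ 2) := hA ε hε
      _ = π * ε *
          ((1 / π) * ∫ t : ℝ, ‖riemannZeta (1 + ε + Complex.I * t)‖ ^ 2 / (1 + t ^ 2)) := by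
        field_simp
      _ ≤ π * ε * (C ^ 2 * zetaR (1 + 2 * ε)) := by
        gcongr ?_ * ?_
        · exact mul_nonneg pi_pos.le hε.1.le
        · exact hbound ε hε
      _ = π * C ^ 2 * (ε * zetaR (1 + 2 * ε)) := by ring
  have hπ : π ≤ π * C ^ 2 * (1 / 2) := le_of_tendsto_of_tendsto
    (tendsto_two_mul_arctan_inv_sqrt_sub A) (tendsto_mul_zetaR_one_add_two_mul.const_mul _) hle
  have hC2 : C ^ 2 < 2 := by
    simpa [sq_sqrt] using pow_lt_pow_left₀ hC hC0 two_ne_zero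
  nlinarith [pi_pos]
end
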